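/- Let ρ₀, ρ₁ be density matrices on a 2^r-dimensional space, and let P be a polynomial with |P(x)| ≤ 1 on [−1,1] and |sgn(x) − P(x)| ≤ Cε for all |x| ∈ (δ, 1]. Define Π̂₀ := I/2 + (1/2)·P((ρ₀−ρ₁)/2). Then |T(ρ₀,ρ₁) − (Tr(Π̂₀ρ₀) − Tr(Π̂₀ρ₁))| ≤ 2Cε + 2^{r+1}δ. -/

import Mathlib

open Matrix ComplexOrder
open scoped Matrix.Norms.L2Operator Kronecker

noncomputable section

variable {m : Type*} [Fintype m] [DecidableEq m]

/-- A density matrix: positive semidefinite with unit trace. -/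
def IsDensity (ρ : Matrix m m ℂ) : Prop := ρ.PosSemidef ∧ ρ.trace = 1

/-- The trace norm `‖A‖₁ = Tr √(AᴴA)`. -/
def traceNorm (A : Matrix m m ℂ) : ℝ :=
  ((Matrix.posSemidef_conjTranspose_mul_self A).1.cfc Real.sqrt).trace.re

/-- The trace distance `T(ρ,σ) = ‖ρ − σ‖₁ / 2`. -/
def traceDist (ρ σ : Matrix m m ℂ) : ℝ := traceNorm (ρ - σ) / 2

/-- The fidelity `F(ρ,σ) = ‖√ρ √σ‖₁`. -/
def fid {ρ σ : Matrix m m ℂ} (hρ : ρ.PosSemidef) (hσ : σ.PosSemidef) : ℝ :=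
  traceNorm (hρ.1.cfc Real.sqrt * hσ.1.cfc Real.sqrt)

/-- The sign function applied to a Hermitian matrix via its spectral decomposition. -/
def signMat {A : Matrix m m ℂ} (hA : A.IsHermitian) : Matrix m m ℂ :=
  hA.cfc (fun x => Real.sign x)

/-- The outer product `|ψ⟩⟨φ|`. -/
def outer (ψ φ : m → ℂ) : Matrix m m ℂ := Matrix.vecMulVec ψ (star φ)

variable {α β : Type*} [Fintype α] [DecidableEq α] [Fintype β] [DecidableEq β]

/-- Partial trace over the first (A) factor. -/
def ptraceA (M : Matrix (α × β) (α × β) ℂ) : Matrix β β ℂ :=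
  Matrix.of fun r r' => ∑ a, M (a, r) (a, r')

/-- Partial trace over the second (R) factor. -/
def ptraceR (M : Matrix (α × β) (α × β) ℂ) : Matrix α α ℂ :=
  Matrix.of fun a a' => ∑ r, M (a, r) (a', r)


variable {m : Type*} [Fintype m] [DecidableEq m] {A : Matrix m m ℂ}

lemma auxCfc_mul (hA : A.IsHermitian) (f g : ℝ → ℝ) :
    hA.cfc f * hA.cfc g = hA.cfc (fun x => f x * g x) := by
  have h {a b c d e f : Matrix m m ℂ} : (a * b * c) * (d * e * f) = a * (b * (c * d) * e) * f := by
    simp only [mul_assoc]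
  simp only [Matrix.IsHermitian.cfc, Unitary.conjStarAlgAut_apply, h, SetLike.coe_mem, Unitary.star_mul_self_of_mem, mul_one,
    diagonal_mul_diagonal]
  congr! with i
  simp

lemma auxCfc_trace (hA : A.IsHermitian) (f : ℝ → ℝ) :
    (hA.cfc f).trace = ∑ i, (f (hA.eigenvalues i) : ℂ) := by
  rw [Matrix.IsHermitian.cfc, Unitary.conjStarAlgAut_apply, trace_mul_cycle, Unitary.star_mul_self_of_mem
    (SetLike.coe_mem _), one_mul, trace_diagonal]
  rfl

lemma auxCfc_id (hA : A.IsHermitian) : hA.cfc (fun x => x) = A := by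
  conv_rhs => rw [hA.spectral_theorem]
  rfl

lemma auxCfc_one (hA : A.IsHermitian) : hA.cfc (fun _ => 1) = 1 := by
  rw [Matrix.IsHermitian.cfc, Unitary.conjStarAlgAut_apply]
  have : diagonal (RCLike.ofReal ∘ (fun _ => (1:ℝ)) ∘ hA.eigenvalues) = (1 : Matrix m m ℂ) := by
    simp [Function.comp_def]
  rw [this, mul_one, Unitary.mul_star_self_of_mem (SetLike.coe_mem _)]

lemma auxCfc_smul (hA : A.IsHermitian) (c : ℝ) (f : ℝ → ℝ) :
    (c : ℂ) • hA.cfc f = hA.cfc (fun x => c * f x) := by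
  rw [Matrix.IsHermitian.cfc, Matrix.IsHermitian.cfc, Unitary.conjStarAlgAut_apply,
    Unitary.conjStarAlgAut_apply, ← smul_mul_assoc, ← mul_smul_comm,
]
  congr 2
  ext i j
  simp only [Matrix.smul_apply, diagonal_apply, Function.comp_apply]
  split_ifs <;> simp

lemma auxCfc_add (hA : A.IsHermitian) (f g : ℝ → ℝ) :
    hA.cfc f + hA.cfc g = hA.cfc (fun x => f x + g x) := by
  rw [Matrix.IsHermitian.cfc, Matrix.IsHermitian.cfc, Matrix.IsHermitian.cfc, Unitary.conjStarAlgAut_apply,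
    Unitary.conjStarAlgAut_apply, Unitary.conjStarAlgAut_apply, ← add_mul, ← mul_add,
    diagonal_add]
  congr! with i
  simp

lemma auxCfc_psd (hA : A.IsHermitian) (f : ℝ → ℝ) (hf : ∀ x, 0 ≤ f x) :
    (hA.cfc f).PosSemidef := by
  rw [Matrix.IsHermitian.cfc, Unitary.conjStarAlgAut_apply, star_eq_conjTranspose]
  exact (Matrix.PosSemidef.diagonal (fun i => by
    simpa using Complex.zero_le_real.mpr (hf _))).mul_mul_conjTranspose_same _

lemma auxTrace_re_nonneg {M : Matrix m m ℂ} (hM : M.PosSemidef) : 0 ≤ M.trace.re := by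
  rw [Matrix.trace, Complex.re_sum]
  refine Finset.sum_nonneg fun i _ => ?_
  have := hM.diag_nonneg (i := i)
  simp only [Matrix.diag] at this ⊢
  exact (Complex.le_def.mp this).1

open scoped MatrixOrder in
lemma auxTrace_mul_re_nonneg {M N : Matrix m m ℂ} (hM : M.PosSemidef) (hN : N.PosSemidef) :
    0 ≤ (M * N).trace.re := by
  have h : M * N = CFC.sqrt M * (CFC.sqrt M * N) := by
    rw [← mul_assoc, CFC.sqrt_mul_sqrt_self M hM.nonneg]
  rw [h, trace_mul_comm]
  apply auxTrace_re_nonneg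
  have := hN.mul_mul_conjTranspose_same (CFC.sqrt M)
  rwa [(CFC.sqrt_nonneg M).posSemidef.1] at this

open scoped MatrixOrder in
lemma auxSqrt_eq {X B : Matrix m m ℂ} (hX : X.PosSemidef) (hB : B.PosSemidef) (h : B ^ 2 = X) :
    hX.1.cfc Real.sqrt = B := by
  rw [← hX.1.cfc_eq, ← cfcₙ_eq_cfc, ← CFC.sqrt_eq_real_sqrt X hX.nonneg]
  exact CFC.sqrt_unique (by rw [← sq]; exact h) hB.nonneg

lemma auxCfc_mul_self (hA : A.IsHermitian) (f : ℝ → ℝ) :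
    hA.cfc f * A = hA.cfc (fun x => f x * x) := by
  have h := auxCfc_mul hA f (fun x => x)
  rwa [auxCfc_id hA] at h

lemma sign_mul_self_eq_abs (x : ℝ) : Real.sign x * x = |x| := by
  rcases lt_trichotomy x 0 with h | h | h
  · rw [Real.sign_of_neg h, abs_of_neg h]; ring
  · simp [h]
  · rw [Real.sign_of_pos h, abs_of_pos h]; ring

lemma abs_sign_le_one (x : ℝ) : |Real.sign x| ≤ 1 := by
  rcases Real.sign_apply_eq x with h | h | h <;> rw [h] <;> norm_num

/-- for densities on a `2^r`-dimensional space and a polynomial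
approximation `P` of the sign function, the approximate Holevo–Helstrom operator
`Π̂₀ = I/2 + P((ρ₀−ρ₁)/2)/2` satisfies
`|T(ρ₀,ρ₁) − (Tr(Π̂₀ρ₀) − Tr(Π̂₀ρ₁))| ≤ 2Cε + 2^(r+1)·δ`. -/
theorem approx_holevoHelstrom_error
    {r : ℕ} {ρ₀ ρ₁ : Matrix (Fin (2 ^ r)) (Fin (2 ^ r)) ℂ}
    (h₀ : IsDensity ρ₀) (h₁ : IsDensity ρ₁)
    (hH : ((2 : ℂ)⁻¹ • (ρ₀ - ρ₁)).IsHermitian)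
    {δ ε C : ℝ} (hδ : 0 < δ) (hε : 0 < ε) (hC : 0 < C) (P : Polynomial ℝ)
    (hPb : ∀ x ∈ Set.Icc (-1 : ℝ) 1, |P.eval x| ≤ 1)
    (hPs : ∀ x : ℝ, δ < |x| → |x| ≤ 1 → |Real.sign x - P.eval x| ≤ C * ε) :
    |traceDist ρ₀ ρ₁ -
        (((2 : ℂ)⁻¹ • (1 + hH.cfc (fun x => P.eval x)) * ρ₀).trace.re -
          ((2 : ℂ)⁻¹ • (1 + hH.cfc (fun x => P.eval x)) * ρ₁).trace.re)|
      ≤ 2 * C * ε + 2 ^ (r + 1) * δ := by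
  classical
  set Δ : Matrix (Fin (2 ^ r)) (Fin (2 ^ r)) ℂ := (2 : ℂ)⁻¹ • (ρ₀ - ρ₁) with hΔ
  set a : Fin (2 ^ r) → ℝ := hH.eigenvalues with ha
  have two_smul_Δ : (2 : ℂ) • Δ = ρ₀ - ρ₁ := by rw [hΔ, smul_smul]; norm_num
  have htrΔ : Δ.trace = 0 := by
    rw [hΔ, trace_smul, trace_sub, h₀.2, h₁.2]; simp
  have hid : hH.cfc (fun x => x) = Δ := auxCfc_id hH
  have hsum0 : ∑ i, a i = 0 := by
    have h1 : (∑ i, (a i : ℂ)) = 0 := by rw [← auxCfc_trace hH (fun x => x), hid, htrΔ]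
    exact_mod_cast h1
  -- Step 1 : the measured difference
  have hM : (((2 : ℂ)⁻¹ • (1 + hH.cfc (fun x => P.eval x)) * ρ₀).trace -
        ((2 : ℂ)⁻¹ • (1 + hH.cfc (fun x => P.eval x)) * ρ₁).trace)
      = ∑ i, ((P.eval (a i) * a i : ℝ) : ℂ) := by
    rw [← trace_sub, ← mul_sub, ← two_smul_Δ, smul_mul_assoc, mul_smul_comm, smul_smul]
    norm_num
    rw [add_mul, one_mul, trace_add, htrΔ, auxCfc_mul_self hH, auxCfc_trace, zero_add]
    simp only [ha]
    norm_cast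
  have hmeas : (((2 : ℂ)⁻¹ • (1 + hH.cfc (fun x => P.eval x)) * ρ₀).trace.re -
        ((2 : ℂ)⁻¹ • (1 + hH.cfc (fun x => P.eval x)) * ρ₁).trace.re)
      = ∑ i, P.eval (a i) * a i := by
    rw [← Complex.sub_re, hM, ← Complex.ofReal_sum, Complex.ofReal_re]
  -- Step 2 : trace distance as sum of |eigenvalues|
  have hherm : (ρ₀ - ρ₁)ᴴ = ρ₀ - ρ₁ := h₀.1.1.sub h₁.1.1
  have hS : (hH.cfc (fun x => 2 * |x|)).PosSemidef :=
    auxCfc_psd hH _ (fun x => by positivity)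
  have hsq : (hH.cfc (fun x => 2 * |x|)) ^ 2 = (ρ₀ - ρ₁)ᴴ * (ρ₀ - ρ₁) := by
    have hΔΔ : Δ * Δ = hH.cfc (fun x => x * x) := by
      have h := auxCfc_mul hH (fun x => x) (fun x => x)
      rwa [hid] at h
    rw [hherm, ← two_smul_Δ, smul_mul_assoc, mul_smul_comm, smul_smul, hΔΔ]
    have h4 : ((2 : ℂ) * 2) = ((4 : ℝ) : ℂ) := by norm_num
    rw [h4, auxCfc_smul, pow_two, auxCfc_mul]
    exact congrArg hH.cfc (funext fun x => by rw [mul_mul_mul_comm, abs_mul_abs_self]; ring)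
  have hsqrt : (posSemidef_conjTranspose_mul_self (ρ₀ - ρ₁)).1.cfc Real.sqrt
      = hH.cfc (fun x => 2 * |x|) :=
    auxSqrt_eq (posSemidef_conjTranspose_mul_self (ρ₀ - ρ₁)) hS hsq
  have htd : traceDist ρ₀ ρ₁ = ∑ i, |a i| := by
    rw [traceDist, traceNorm, hsqrt, auxCfc_trace, ← Complex.ofReal_sum, Complex.ofReal_re,
      ← Finset.mul_sum]
    ring
  -- Step 3 : sum of |eigenvalues| is at most 1
  have hgpsd : (hH.cfc (fun x => if 0 < x then 1 else 0)).PosSemidef :=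
    auxCfc_psd hH _ (fun x => by split_ifs <;> norm_num)
  have hcompl : hH.cfc (fun x => 1 - (if 0 < x then 1 else 0))
      = 1 - hH.cfc (fun x => if 0 < x then 1 else 0) := by
    refine eq_sub_of_add_eq ?_
    rw [auxCfc_add,
      show (fun x : ℝ => (1 - (if 0 < x then 1 else 0)) + (if 0 < x then 1 else 0))
        = (fun _ : ℝ => (1 : ℝ)) from funext fun x => by ring]
    exact auxCfc_one hH
  have hcomplpsd : ((1 : Matrix (Fin (2 ^ r)) (Fin (2 ^ r)) ℂ)
      - hH.cfc (fun x => if 0 < x then 1 else 0)).PosSemidef := by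
    rw [← hcompl]
    exact auxCfc_psd hH _ (fun x => by split_ifs <;> norm_num)
  have key : (2 : ℝ) * ∑ i, max (a i) 0
      = ((hH.cfc (fun x => if 0 < x then 1 else 0)) * ρ₀).trace.re
        - ((hH.cfc (fun x => if 0 < x then 1 else 0)) * ρ₁).trace.re := by
    have e1 : (hH.cfc (fun x => if 0 < x then 1 else 0)) * ρ₀
        - (hH.cfc (fun x => if 0 < x then 1 else 0)) * ρ₁
        = (2 : ℂ) • ((hH.cfc (fun x => if 0 < x then 1 else 0)) * Δ) := by
      rw [← mul_sub, ← two_smul_Δ, mul_smul_comm]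
    have e2 : ((hH.cfc (fun x => if 0 < x then 1 else 0)) * Δ).trace
        = ∑ i, ((max (a i) 0 : ℝ) : ℂ) := by
      rw [auxCfc_mul_self hH, auxCfc_trace]
      refine Finset.sum_congr rfl fun i _ => ?_
      congr 1
      by_cases h : 0 < a i
      · rw [if_pos h, one_mul, max_eq_left h.le]
      · rw [if_neg h, zero_mul, max_eq_right (not_lt.mp h)]
    have e3 := congrArg (fun M : Matrix (Fin (2 ^ r)) (Fin (2 ^ r)) ℂ => M.trace.re) e1
    simp only [trace_sub, Complex.sub_re, trace_smul, e2] at e3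
    rw [e3, ← Complex.ofReal_sum, smul_eq_mul,
      show ((2 : ℂ)) = ((2 : ℝ) : ℂ) from by norm_num, ← Complex.ofReal_mul,
      Complex.ofReal_re]
  have h0le : 0 ≤ ((hH.cfc (fun x => if 0 < x then 1 else 0)) * ρ₁).trace.re :=
    auxTrace_mul_re_nonneg hgpsd h₁.1
  have hle1 : ((hH.cfc (fun x => if 0 < x then 1 else 0)) * ρ₀).trace.re ≤ 1 := by
    have e : ((hH.cfc (fun x => if 0 < x then 1 else 0)) * ρ₀).trace
        = ρ₀.trace - ((1 - hH.cfc (fun x => if 0 < x then 1 else 0)) * ρ₀).trace := by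
      rw [sub_mul, one_mul, trace_sub]; ring
    have h2 : 0 ≤ ((1 - hH.cfc (fun x => if 0 < x then 1 else 0)) * ρ₀).trace.re :=
      auxTrace_mul_re_nonneg hcomplpsd h₀.1
    have := congrArg Complex.re e
    rw [Complex.sub_re, h₀.2, Complex.one_re] at this
    rw [this]
    linarith
  have hmaxsum : ∑ i, max (a i) 0 ≤ 1 / 2 := by linarith [key, h0le, hle1]
  have habs_le : ∑ i, |a i| ≤ 1 := by
    have e : ∀ x : ℝ, |x| = 2 * max x 0 - x := by
      intro x
      rcases le_total x 0 with h | h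
      · rw [max_eq_right h, abs_of_nonpos h]; ring
      · rw [max_eq_left h, abs_of_nonneg h]; ring
    rw [Finset.sum_congr rfl fun i _ => e (a i), Finset.sum_sub_distrib, hsum0,
      ← Finset.mul_sum]
    linarith
  -- Final estimate
  rw [htd, hmeas]
  have habs1 : ∀ i, |a i| ≤ 1 := fun i =>
    le_trans (Finset.single_le_sum (f := fun i => |a i|) (fun i _ => abs_nonneg _)
      (Finset.mem_univ i)) habs_le
  have hterm : ∀ i, abs (|a i| - P.eval (a i) * a i) ≤ C * ε * |a i| + 2 * δ := by
    intro i
    have hx1 : |a i| ≤ 1 := habs1 i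
    have hfac : |a i| - P.eval (a i) * a i = (Real.sign (a i) - P.eval (a i)) * a i := by
      rw [sub_mul, sign_mul_self_eq_abs]
    rw [hfac, abs_mul]
    by_cases hδx : δ < |a i|
    · have h := hPs (a i) hδx hx1
      have : |Real.sign (a i) - P.eval (a i)| * |a i| ≤ (C * ε) * |a i| :=
        mul_le_mul_of_nonneg_right h (abs_nonneg _)
      nlinarith
    · push_neg at hδx
      have hP1 : |P.eval (a i)| ≤ 1 := hPb (a i) (Set.mem_Icc.mpr (abs_le.mp hx1))
      have hs1 : |Real.sign (a i)| ≤ 1 := abs_sign_le_one _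
      have h2 : |Real.sign (a i) - P.eval (a i)| ≤ 2 := (abs_sub _ _).trans (by linarith)
      have : |Real.sign (a i) - P.eval (a i)| * |a i| ≤ 2 * δ := by
        calc |Real.sign (a i) - P.eval (a i)| * |a i| ≤ 2 * |a i| :=
              mul_le_mul_of_nonneg_right h2 (abs_nonneg _)
          _ ≤ 2 * δ := by linarith
      nlinarith [mul_nonneg (mul_nonneg hC.le hε.le) (abs_nonneg (a i))]
  calc |(∑ i, |a i|) - ∑ i, P.eval (a i) * a i|
      = |∑ i, (|a i| - P.eval (a i) * a i)| := by rw [Finset.sum_sub_distrib]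
    _ ≤ ∑ i, abs (|a i| - P.eval (a i) * a i) := Finset.abs_sum_le_sum_abs _ _
    _ ≤ ∑ i, (C * ε * |a i| + 2 * δ) := Finset.sum_le_sum fun i _ => hterm i
    _ = C * ε * (∑ i, |a i|) + (2 ^ r : ℕ) * (2 * δ) := by
        rw [Finset.sum_add_distrib, ← Finset.mul_sum, Finset.sum_const, Finset.card_univ,
          Fintype.card_fin, nsmul_eq_mul]
    _ ≤ C * ε * 1 + 2 ^ r * (2 * δ) := by
        push_cast
        have : C * ε * (∑ i, |a i|) ≤ C * ε * 1 :=
          mul_le_mul_of_nonneg_left habs_le (by positivity)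
        linarith
    _ ≤ 2 * C * ε + 2 ^ (r + 1) * δ := by
        rw [pow_succ]
        nlinarith [mul_pos hC hε]
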